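/- arXiv:2604.16146 — 3 statements merged into one kernel-verified Lean document; each statement's English description precedes it below -/
import Mathlib

section
/- Proposition 1: Let V be a finite nonempty vocabulary and let p, q*, s : V → ℝ be probability distributions on V (nonnegative and summing to 1) with p_v > 0 for all v. Suppose there exists α ∈ [0,1] such that q*_v·α ≤ s_v ≤ p_v + q*_v·α for all v ∈ V. Define the rejection probabilities μ_v = (p_v + q*_v·α − s_v)/p_v. Then the marginal distribution of the probabilistic graphical model, π(v) = p_v·(1 − μ_v) + (Σ_w p_w·μ_w)·q*_v, satisfies π(v) = s_v for every v ∈ V. -/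
theorem implicit_reward_pgm_marginal
    {V : Type*} [Fintype V] [Nonempty V]
    (p qstar s : V → ℝ)
    (hp0 : ∀ v, 0 ≤ p v) (hp1 : ∑ v, p v = 1)
    (hq0 : ∀ v, 0 ≤ qstar v) (hq1 : ∑ v, qstar v = 1)
    (hs0 : ∀ v, 0 ≤ s v) (hs1 : ∑ v, s v = 1)
    (hppos : ∀ v, 0 < p v)
    (α : ℝ) (hα : α ∈ Set.Icc (0 : ℝ) 1)
    (henc : ∀ v, qstar v * α ≤ s v ∧ s v ≤ p v + qstar v * α)
    (μ : V → ℝ) (hμ : ∀ v, μ v = (p v + qstar v * α - s v) / p v) :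
    ∀ v, p v * (1 - μ v) + (∑ w, p w * μ w) * qstar v = s v := by
  have key : ∀ v, p v * μ v = p v + qstar v * α - s v := by
    intro v
    rw [hμ v, mul_div_cancel₀ _ (hppos v).ne']
  have hsum : (∑ w, p w * μ w) = α := by
    simp only [key, Finset.sum_sub_distrib, Finset.sum_add_distrib, hp1, hs1,
      ← Finset.sum_mul, hq1]
    ring
  intro v
  rw [hsum]
  have := key v
  nlinarith [this]
end

section
/- Representability criterion: Let V be a finite nonempty vocabulary and let p, q*, s : V → ℝ be probability distributions on V (nonnegative and summing to 1) with p_v > 0 for all v. Then there exists μ : V → [0,1] such that p_v·(1 − μ_v) + (Σ_w p_w·μ_w)·q*_v = s_v for all v ∈ V if and only if there exists α ∈ [0,1] such that q*_v·α ≤ s_v ≤ p_v + q*_v·α for all v ∈ V. -/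
theorem representability_criterion
    {V : Type*} [Fintype V] [Nonempty V]
    (p qstar s : V → ℝ)
    (hp0 : ∀ v, 0 ≤ p v) (hp1 : ∑ v, p v = 1)
    (hq0 : ∀ v, 0 ≤ qstar v) (hq1 : ∑ v, qstar v = 1)
    (hs0 : ∀ v, 0 ≤ s v) (hs1 : ∑ v, s v = 1)
    (hppos : ∀ v, 0 < p v) :
    (∃ μ : V → ℝ, (∀ v, μ v ∈ Set.Icc (0 : ℝ) 1) ∧
        ∀ v, p v * (1 - μ v) + (∑ w, p w * μ w) * qstar v = s v) ↔
    (∃ α ∈ Set.Icc (0 : ℝ) 1,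
        ∀ v, qstar v * α ≤ s v ∧ s v ≤ p v + qstar v * α) := by
  constructor
  · rintro ⟨μ, hμ, heq⟩
    refine ⟨∑ w, p w * μ w, ⟨?_, ?_⟩, fun v => ?_⟩
    · exact Finset.sum_nonneg fun w _ => mul_nonneg (hp0 w) (hμ w).1
    · calc ∑ w, p w * μ w ≤ ∑ w, p w :=
            Finset.sum_le_sum fun w _ => by
              nlinarith [(hμ w).1, (hμ w).2, hp0 w]
        _ = 1 := hp1
    · have h := heq v
      have h1 : 0 ≤ p v * (1 - μ v) := mul_nonneg (hp0 v) (by linarith [(hμ v).2])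
      have h2 : p v * (1 - μ v) ≤ p v := by nlinarith [(hμ v).1, hp0 v]
      constructor <;> nlinarith
  · rintro ⟨α, ⟨hα0, hα1⟩, hb⟩
    refine ⟨fun v => 1 - (s v - α * qstar v) / p v, fun v => ?_, fun v => ?_⟩
    · have hpv := hppos v
      have h1 := (hb v).1
      have h2 := (hb v).2
      constructor
      · have : (s v - α * qstar v) / p v ≤ 1 := by
          rw [div_le_one hpv]; linarith
        simpa using this
      · have : 0 ≤ (s v - α * qstar v) / p v := div_nonneg (by linarith) hpv.le
        simp; linarith
    · have hsum : ∑ w, p w * (1 - (s w - α * qstar w) / p w) = α := by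
        have hpt : ∀ w, p w * (1 - (s w - α * qstar w) / p w)
            = p w - (s w - α * qstar w) := by
          intro w
          rw [mul_sub, mul_one, mul_div_cancel₀ _ (hppos w).ne']
        simp only [hpt]
        rw [Finset.sum_sub_distrib, Finset.sum_sub_distrib, hp1, hs1,
          ← Finset.mul_sum, hq1]
        ring
      rw [hsum]
      have := (hppos v).ne'
      field_simp
      ring
end

section
/- Non-representability: There exist a finite vocabulary V and probability distributions p, q, q* : V → ℝ (nonnegative and summing to 1), with p_v > 0 and q_v > 0 for all v, such that for the implicit-reward distribution s_v = p_v·q*_v/(q_v·Z) with Z = Σ_w p_w·q*_w/q_w, no α ∈ [0,1] satisfies q*_v·α ≤ s_v ≤ p_v + q*_v·α for all v ∈ V. -/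
theorem implicit_reward_not_representable :
    ∃ (V : Type) (_ : Fintype V) (p q qstar : V → ℝ),
      (∀ v, 0 ≤ p v) ∧ (∑ v, p v = 1) ∧
      (∀ v, 0 ≤ q v) ∧ (∑ v, q v = 1) ∧
      (∀ v, 0 ≤ qstar v) ∧ (∑ v, qstar v = 1) ∧
      (∀ v, 0 < p v) ∧ (∀ v, 0 < q v) ∧
      ¬ ∃ α ∈ Set.Icc (0 : ℝ) 1,
          ∀ v, qstar v * α ≤ p v * qstar v / (q v * (∑ w, p w * qstar w / q w)) ∧
               p v * qstar v / (q v * (∑ w, p w * qstar w / q w)) ≤ p v + qstar v * α := by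
  refine ⟨Bool, inferInstance, fun _ => 1/2, fun b => if b then 9/10 else 1/10,
    fun _ => 1/2, ?_, ?_, ?_, ?_, ?_, ?_, ?_, ?_, ?_⟩
  · intro v; norm_num
  · simp [Fintype.sum_bool]
  · intro v; cases v <;> norm_num
  · simp [Fintype.sum_bool]; norm_num
  · intro v; norm_num
  · simp [Fintype.sum_bool]
  · intro v; norm_num
  · intro v; cases v <;> norm_num
  · rintro ⟨α, ⟨hα0, hα1⟩, h⟩
    have hZ : (∑ w : Bool, (1/2 : ℝ) * (1/2) / (if w then (9/10 : ℝ) else 1/10)) = 25/9 := by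
      simp [Fintype.sum_bool]; norm_num
    have h1 := (h true).1
    have h2 := (h false).2
    rw [hZ] at h1 h2
    norm_num at h1 h2
    linarith
end
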